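/- Let K be a Hilbert space, Q a positive self-adjoint nuclear operator on K, and Q(t) a positive self-adjoint operator with Q(t) ≤ Q. If Φ : K → K is a bounded operator that restricts to a Hilbert–Schmidt operator from Q^{1/2}(K) to K (i.e. Φ Q^{1/2} ∈ L₂(K)), then ‖Φ Q(t)^{1/2}‖_{L₂(K)} ≤ ‖Φ Q^{1/2}‖_{L₂(K)}. -/

import Mathlib

/-!
The squared Hilbert–Schmidt norm is invariant under taking adjoints (Parseval in both variables
and exchange of the double sum), so `‖Φ A‖₂ = ‖A Φ*‖₂` for self-adjoint `A`. The hypothesis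
`Q(t) ≤ Q` says `‖Q(t)^{1/2} y‖ ≤ ‖Q^{1/2} y‖` for every `y`, which bounds `‖Q(t)^{1/2} Φ*‖₂`
termwise by `‖Q^{1/2} Φ*‖₂`. The sums are taken in `ℝ≥0∞`, so summability only matters when
returning to real numbers at the end.
-/

open RealInnerProductSpace
open scoped InnerProductSpace ENNReal

theorem norm_apply_le_of_inner_apply_apply_le {E : Type*} [NormedAddCommGroup E]
    [InnerProductSpace ℝ E] {A B : E →ₗ[ℝ] E} (hA : A.IsSymmetric) (hB : B.IsSymmetric)
    (h : ∀ x, ⟪A (A x), x⟫ ≤ ⟪B (B x), x⟫) (x : E) : ‖A x‖ ≤ ‖B x‖ := by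
  have hsq : ‖A x‖ ^ 2 ≤ ‖B x‖ ^ 2 := by
    rw [← real_inner_self_eq_norm_sq, ← real_inner_self_eq_norm_sq, ← hA, ← hB]
    exact h x
  exact (sq_le_sq₀ (norm_nonneg _) (norm_nonneg _)).mp hsq

theorem ENNReal.tsum_toReal_le_tsum_toReal {ι : Type*} {f g : ι → ℝ≥0∞} (hf : ∀ i, f i ≠ ∞)
    (hg : ∑' i, g i ≠ ∞) (h : ∑' i, f i ≤ ∑' i, g i) :
    ∑' i, (f i).toReal ≤ ∑' i, (g i).toReal := by
  rw [← ENNReal.tsum_toReal_eq hf, ← ENNReal.tsum_toReal_eq (ENNReal.ne_top_of_tsum_ne_top hg)]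
  exact ENNReal.toReal_mono hg h

theorem tsum_enorm_sq_ne_top {ι E : Type*} [SeminormedAddCommGroup E] {f : ι → E}
    (hf : Summable fun i => ‖f i‖ ^ 2) : ∑' i, ‖f i‖ₑ ^ 2 ≠ ∞ := by
  simp only [enorm_eq_nnnorm]
  have hf' : Summable fun i => ‖f i‖₊ ^ 2 := by
    rw [← NNReal.summable_coe]; push_cast; exact hf
  exact_mod_cast ENNReal.tsum_coe_ne_top_iff_summable.mpr hf'

namespace HilbertBasis
variable {𝕜 E F ι κ : Type*} [RCLike 𝕜] [NormedAddCommGroup E] [InnerProductSpace 𝕜 E]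
  [NormedAddCommGroup F] [InnerProductSpace 𝕜 F]

theorem enorm_sq_eq_tsum (b : HilbertBasis ι 𝕜 E) (x : E) :
    ‖x‖ₑ ^ 2 = ∑' i, ‖⟪b i, x⟫_𝕜‖ₑ ^ 2 := by
  have h := lp.hasSum_norm (p := 2) (by norm_num) (b.repr x)
  simp only [b.repr_apply_apply, LinearIsometryEquiv.norm_map, ENNReal.toReal_ofNat,
    Real.rpow_two] at h
  have h' : HasSum (fun i => ‖⟪b i, x⟫_𝕜‖₊ ^ 2) (‖x‖₊ ^ 2) := by
    rw [← NNReal.hasSum_coe]; push_cast; exact h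
  simp only [enorm_eq_nnnorm]
  exact_mod_cast (ENNReal.hasSum_coe.mpr h').tsum_eq.symm

variable [CompleteSpace E] [CompleteSpace F]

theorem tsum_enorm_sq_adjoint (b : HilbertBasis ι 𝕜 E) (c : HilbertBasis κ 𝕜 F)
    (T : E →L[𝕜] F) :
    ∑' i, ‖T (b i)‖ₑ ^ 2 = ∑' j, ‖T.adjoint (c j)‖ₑ ^ 2 := calc
  ∑' i, ‖T (b i)‖ₑ ^ 2 = ∑' i, ∑' j, ‖⟪c j, T (b i)⟫_𝕜‖ₑ ^ 2 := by
    simp only [c.enorm_sq_eq_tsum]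
  _ = ∑' j, ∑' i, ‖⟪b i, T.adjoint (c j)⟫_𝕜‖ₑ ^ 2 := by
    rw [ENNReal.tsum_comm]
    refine tsum_congr fun j => tsum_congr fun i => ?_
    rw [← ContinuousLinearMap.adjoint_inner_left, ← inner_conj_symm, RCLike.enorm_conj]
  _ = ∑' j, ‖T.adjoint (c j)‖ₑ ^ 2 := by
    simp only [b.enorm_sq_eq_tsum]

theorem tsum_enorm_sq_comp_le (b : HilbertBasis ι 𝕜 E) {A B : E →L[𝕜] E}
    (hA : IsSelfAdjoint A) (hB : IsSelfAdjoint B) (hAB : ∀ x, ‖A x‖ ≤ ‖B x‖) (Φ : E →L[𝕜] F) :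
    ∑' i, ‖Φ (A (b i))‖ₑ ^ 2 ≤ ∑' i, ‖Φ (B (b i))‖ₑ ^ 2 := by
  obtain ⟨_, c, -⟩ := exists_hilbertBasis 𝕜 F
  have hΦA := b.tsum_enorm_sq_adjoint c (Φ ∘L A)
  have hΦB := b.tsum_enorm_sq_adjoint c (Φ ∘L B)
  simp only [ContinuousLinearMap.adjoint_comp, hA.adjoint_eq, hB.adjoint_eq,
    ContinuousLinearMap.comp_apply] at hΦA hΦB
  rw [hΦA, hΦB]
  gcongr with j
  rw [← ofReal_norm, ← ofReal_norm]
  exact ENNReal.ofReal_le_ofReal (hAB _)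

end HilbertBasis

theorem stmt9_general {K : Type*} [NormedAddCommGroup K] [InnerProductSpace ℝ K] [CompleteSpace K]
    {ι : Type*} (e : HilbertBasis ι ℝ K)
    (Qh Qth Φ : K →L[ℝ] K)
    (hQh_sym : ∀ x y : K, ⟪Qh x, y⟫ = ⟪x, Qh y⟫)
    (hQth_sym : ∀ x y : K, ⟪Qth x, y⟫ = ⟪x, Qth y⟫)
    (hle : ∀ k : K, ⟪Qth (Qth k), k⟫ ≤ ⟪Qh (Qh k), k⟫)
    (hHS : Summable fun i => ‖Φ (Qh (e i))‖ ^ 2) :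
    ∑' i, ‖Φ (Qth (e i))‖ ^ 2 ≤ ∑' i, ‖Φ (Qh (e i))‖ ^ 2 := by
  have hQh : (Qh : K →ₗ[ℝ] K).IsSymmetric := hQh_sym
  have hQth : (Qth : K →ₗ[ℝ] K).IsSymmetric := hQth_sym
  have hHS_enorm : ∑' i, ‖Φ (Qh (e i))‖ₑ ^ 2 ≠ ∞ := tsum_enorm_sq_ne_top hHS
  have hsum_le := e.tsum_enorm_sq_comp_le hQth.isSelfAdjoint hQh.isSelfAdjoint
    (norm_apply_le_of_inner_apply_apply_le hQth hQh hle) Φ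
  simpa only [ENNReal.toReal_pow, toReal_enorm] using
    ENNReal.tsum_toReal_le_tsum_toReal (fun i => by finiteness) hHS_enorm hsum_le

/-- If `0 ≤ Q(t) ≤ Q` (as quadratic forms, with positive self-adjoint square roots
`Qth` and `Qh`) and `Φ` is bounded with `Φ ∘ Qh` Hilbert–Schmidt, then the
Hilbert–Schmidt norm of `Φ ∘ Qth` is bounded by that of `Φ ∘ Qh`:
`‖Φ Q(t)^{1/2}‖_{L₂} ≤ ‖Φ Q^{1/2}‖_{L₂}` (squared norms computed in a Hilbert basis). -/
theorem stmt9 {K : Type*} [NormedAddCommGroup K] [InnerProductSpace ℝ K] [CompleteSpace K]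
    {ι : Type*} (e : HilbertBasis ι ℝ K)
    (Qh Qth Φ : K →L[ℝ] K)
    (hQh_sym : ∀ x y : K, ⟪Qh x, y⟫ = ⟪x, Qh y⟫)
    (hQth_sym : ∀ x y : K, ⟪Qth x, y⟫ = ⟪x, Qth y⟫)
    (hQh_pos : ∀ k : K, 0 ≤ ⟪Qh k, k⟫)
    (hQth_pos : ∀ k : K, 0 ≤ ⟪Qth k, k⟫)
    (hle : ∀ k : K, ⟪Qth (Qth k), k⟫ ≤ ⟪Qh (Qh k), k⟫)
    (hHS : Summable fun i => ‖Φ (Qh (e i))‖ ^ 2) :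
    ∑' i, ‖Φ (Qth (e i))‖ ^ 2 ≤ ∑' i, ‖Φ (Qh (e i))‖ ^ 2 :=
  stmt9_general e Qh Qth Φ hQh_sym hQth_sym hle hHS
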